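/- Let J be a unital Jordan algebra over a field of characteristic ≠ 2 containing H₂(F) as a unital subalgebra, Z = {z ∈ J : (z,a,b) = 0 ∀ a,b ∈ H₂(F)}, N = {n ∈ J : en = ½n, hn = 0}. Define [z,n] = h(z,e,n) for z ∈ Z, n ∈ N. Then [z,n] ∈ Z, and [z²,n] = 2z[z,n] = 2[z,zn] for all z ∈ Z, n ∈ N. -/

import Mathlib

/-!
Let `J = J₁ ⊕ J_½ ⊕ J₀` be the Peirce decomposition relative to `e`; then `N ⊆ J_½`, and an
element `z ∈ Z` splits as `ze ∈ J₁` plus `z - ze ∈ J₀`. Everything follows from the linearized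
Jordan identity:
* the Peirce rules `J₁ J_½, J₀ J_½ ⊆ J_½` put `(z,e,n)` in `J_½`, and `h J_½ ⊆ Z`, so `[z,n] ∈ Z`;
* `(z²,e,n) = 2 (z,e,zn)`, which gives `[z²,n] = 2[z,zn]`;
* multiplications by `J₁` and by `J₀` commute on `J_½`, whence `(z,e,zn) = z (z,e,n)`; and
  multiplication by `z` commutes with multiplication by `h` on `J_½`, which gives
  `[z²,n] = 2z[z,n]`.
-/

/-- The associator of a bilinear multiplication. -/
def jassoc {F J : Type*} [Field F] [AddCommGroup J] [Module F J]
    (m : J →ₗ[F] J →ₗ[F] J) (x y z : J) : J :=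
  m (m x y) z - m x (m y z)

/-- The copy of H₂(F) inside J, spanned by 1, e = e₁₁, h = e₁₂+e₂₁. -/
def H2span {F J : Type*} [Field F] [AddCommGroup J] [Module F J]
    (one e h : J) : Submodule F J :=
  Submodule.span F {one, e, h}

/-- Z = the set of elements associating with every pair of elements of H₂(F). -/
def Zset {F J : Type*} [Field F] [AddCommGroup J] [Module F J]
    (m : J →ₗ[F] J →ₗ[F] J) (one e h : J) : Set J :=
  {z : J | ∀ a ∈ H2span (F := F) one e h, ∀ b ∈ H2span (F := F) one e h, jassoc m z a b = 0}

/-- N = {n ∈ J : en = ½n, hn = 0}. -/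
def Nset {F J : Type*} [Field F] [AddCommGroup J] [Module F J]
    (m : J →ₗ[F] J →ₗ[F] J) (e h : J) : Set J :=
  {n : J | m e n = (2 : F)⁻¹ • n ∧ m h n = 0}

section

variable {F J : Type*} [Field F] [AddCommGroup J] [Module F J] {m : J →ₗ[F] J →ₗ[F] J}

theorem jassoc_swap (comm : ∀ x y : J, m x y = m y x) (x y w : J) :
    jassoc m w y x = -jassoc m x y w := by
  simp only [jassoc, neg_sub]
  rw [comm (m w y) x, comm w y, comm w (m y x), comm y x]

theorem jordan_linearized (hchar : (2 : F) ≠ 0) (comm : ∀ x y : J, m x y = m y x)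
    (jordan : ∀ x y : J, m (m (m x x) y) x = m (m x x) (m y x)) (x u v y : J) :
    jassoc m (m u v) y x + jassoc m (m x u) y v + jassoc m (m x v) y u = 0 := by
  linear_combination (norm := skip)
    (2 : F)⁻¹ • (jordan (x + u + v) y - jordan (x + u) y - jordan (x + v) y - jordan (u + v) y
      + jordan x y + jordan u y + jordan v y)
  simp only [jassoc, map_add, LinearMap.add_apply, comm]
  match_scalars <;> field_simp <;> ring

theorem jassoc_mul_self_left (hchar : (2 : F) ≠ 0) (comm : ∀ x y : J, m x y = m y x)
    (jordan : ∀ x y : J, m (m (m x x) y) x = m (m x x) (m y x)) (x y w : J) :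
    jassoc m (m x x) y w = (2 : F) • jassoc m x y (m x w) := by
  linear_combination (norm := module) jordan_linearized hchar comm jordan x x w y
    - 2 • jassoc_swap comm x y (m x w)

theorem peirce_one_mul_half (hchar : (2 : F) ≠ 0) (comm : ∀ x y : J, m x y = m y x)
    (jordan : ∀ x y : J, m (m (m x x) y) x = m (m x x) (m y x)) {e a n : J}
    (hee : m e e = e) (ha : m e a = a) (hn : m e n = (2 : F)⁻¹ • n) :
    m e (m a n) = (2 : F)⁻¹ • m a n := by
  linear_combination (norm := skip) jordan_linearized hchar comm jordan e e a n
  simp only [jassoc, comm, hee, ha, hn, map_smul, LinearMap.smul_apply]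
  match_scalars <;> field_simp <;> ring

theorem peirce_zero_mul_half (hchar : (2 : F) ≠ 0) (comm : ∀ x y : J, m x y = m y x)
    (jordan : ∀ x y : J, m (m (m x x) y) x = m (m x x) (m y x)) {e a n : J}
    (hee : m e e = e) (ha : m e a = 0) (hn : m e n = (2 : F)⁻¹ • n) :
    m e (m a n) = (2 : F)⁻¹ • m a n := by
  linear_combination (norm := skip) -jordan_linearized hchar comm jordan e e a n
  simp only [jassoc, comm, hee, ha, hn, map_smul, LinearMap.smul_apply, map_zero,
    LinearMap.zero_apply]
  match_scalars <;> field_simp <;> ring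

theorem peirce_one_zero_mul_comm_half (hchar : (2 : F) ≠ 0) (comm : ∀ x y : J, m x y = m y x)
    (jordan : ∀ x y : J, m (m (m x x) y) x = m (m x x) (m y x)) {e a b n : J}
    (hee : m e e = e) (ha : m e a = a) (hb : m e b = 0) (hn : m e n = (2 : F)⁻¹ • n) :
    m a (m b n) = m b (m a n) := by
  have han := peirce_one_mul_half hchar comm jordan hee ha hn
  have hbn := peirce_zero_mul_half hchar comm jordan hee hb hn
  have L := jordan_linearized hchar comm jordan
  linear_combination (norm := skip) L e e a (m b n) - L e e b (m a n) - L e a n b - L e b n a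
  simp only [jassoc, comm, hee, ha, hb, hn, han, hbn, map_smul, LinearMap.smul_apply, map_zero,
    LinearMap.zero_apply]
  match_scalars <;> field_simp <;> ring

theorem jassoc_eq_zero_of_mem_span {s : Set J} {w : J}
    (hs : ∀ a ∈ s, ∀ b ∈ s, jassoc m w a b = 0) {a b : J}
    (ha : a ∈ Submodule.span F s) (hb : b ∈ Submodule.span F s) : jassoc m w a b = 0 := by
  induction ha, hb using Submodule.span_induction₂ with
  | mem_mem a b ha hb => exact hs a ha b hb
  | zero_left b _ => simp [jassoc]
  | zero_right a _ => simp [jassoc]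
  | add_left x y b _ _ _ hx hy =>
    simp only [jassoc, map_add, LinearMap.add_apply] at hx hy ⊢
    rw [add_sub_add_comm, hx, hy, add_zero]
  | add_right a x y _ _ _ hx hy =>
    simp only [jassoc, map_add] at hx hy ⊢
    rw [add_sub_add_comm, hx, hy, add_zero]
  | smul_left r x b _ _ hx =>
    simp only [jassoc, map_smul, LinearMap.smul_apply] at hx ⊢
    rw [← smul_sub, hx, smul_zero]
  | smul_right r a x _ _ hx =>
    simp only [jassoc, map_smul] at hx ⊢
    rw [← smul_sub, hx, smul_zero]

theorem mem_Zset_of_jassoc_eq_zero (comm : ∀ x y : J, m x y = m y x) {one e h w : J}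
    (one_mul : ∀ x : J, m one x = x)
    (hwee : jassoc m w e e = 0) (hweh : jassoc m w e h = 0)
    (hwhe : jassoc m w h e = 0) (hwhh : jassoc m w h h = 0) : w ∈ Zset m one e h := by
  have mul_one (x : J) : m x one = x := (comm x one).trans (one_mul x)
  intro a ha b hb
  refine jassoc_eq_zero_of_mem_span ?_ ha hb
  rintro a (rfl | rfl | rfl) b (rfl | rfl | rfl) <;>
    first | assumption | simp [jassoc, one_mul, mul_one]

theorem h_mul_mem_Zset_of_peirce_half (hchar : (2 : F) ≠ 0) (comm : ∀ x y : J, m x y = m y x)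
    (jordan : ∀ x y : J, m (m (m x x) y) x = m (m x x) (m y x)) {one e h x : J}
    (one_mul : ∀ x : J, m one x = x)
    (hee : m e e = e) (hhh : m h h = one) (heh : m e h = (2 : F)⁻¹ • h)
    (hx : m e x = (2 : F)⁻¹ • x) : m h x ∈ Zset m one e h := by
  apply mem_Zset_of_jassoc_eq_zero comm one_mul
  · linear_combination (norm := skip) jordan_linearized hchar comm jordan e h x e
    simp only [jassoc, comm, hee, heh, hx, map_smul, LinearMap.smul_apply]
    match_scalars <;> field_simp <;> ring
  · linear_combination (norm := skip) (2 : F)⁻¹ • jordan_linearized hchar comm jordan h h x e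
    simp only [jassoc, comm, one_mul, hhh, heh, hx, map_smul, LinearMap.smul_apply]
    match_scalars <;> field_simp <;> ring
  · linear_combination (norm := skip) jordan_linearized hchar comm jordan e h x h
    simp only [jassoc, comm, one_mul, hhh, heh, hx, map_smul, LinearMap.smul_apply]
    match_scalars <;> field_simp <;> ring
  · linear_combination (norm := skip) (2 : F)⁻¹ • jordan_linearized hchar comm jordan h h x h
    simp only [jassoc, comm, one_mul, hhh]
    match_scalars <;> field_simp <;> ring

variable {one e h z : J}

theorem e_mem_H2span : e ∈ H2span (F := F) one e h := Submodule.subset_span (by simp)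

theorem h_mem_H2span : h ∈ H2span (F := F) one e h := Submodule.subset_span (by simp)

theorem mul_mul_of_mem_Zset (hz : z ∈ Zset m one e h) {a b : J}
    (ha : a ∈ H2span (F := F) one e h) (hb : b ∈ H2span (F := F) one e h) :
    m (m z a) b = m z (m a b) :=
  sub_eq_zero.mp (hz a ha b hb)

theorem e_mul_mul_e_of_mem_Zset (comm : ∀ x y : J, m x y = m y x) (hee : m e e = e)
    (hz : z ∈ Zset m one e h) : m e (m z e) = m z e := by
  rw [comm, mul_mul_of_mem_Zset hz e_mem_H2span e_mem_H2span, hee]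

theorem e_mul_sub_mul_e_of_mem_Zset (comm : ∀ x y : J, m x y = m y x) (hee : m e e = e)
    (hz : z ∈ Zset m one e h) : m e (z - m z e) = 0 := by
  rw [map_sub, e_mul_mul_e_of_mem_Zset comm hee hz, comm, sub_self]

theorem e_mul_mul_of_mem_Zset (hchar : (2 : F) ≠ 0) (comm : ∀ x y : J, m x y = m y x)
    (jordan : ∀ x y : J, m (m (m x x) y) x = m (m x x) (m y x)) (hee : m e e = e)
    (hz : z ∈ Zset m one e h) {y : J} (hy : m e y = (2 : F)⁻¹ • y) :
    m e (m z y) = (2 : F)⁻¹ • m z y := by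
  have h1 := peirce_one_mul_half hchar comm jordan hee (e_mul_mul_e_of_mem_Zset comm hee hz) hy
  have h0 := peirce_zero_mul_half hchar comm jordan hee (e_mul_sub_mul_e_of_mem_Zset comm hee hz) hy
  simp only [map_sub, LinearMap.sub_apply, smul_sub] at h0
  linear_combination (norm := module) h1 + h0

theorem mul_h_mul_comm_of_mem_Zset (hchar : (2 : F) ≠ 0) (comm : ∀ x y : J, m x y = m y x)
    (jordan : ∀ x y : J, m (m (m x x) y) x = m (m x x) (m y x))
    (hee : m e e = e) (heh : m e h = (2 : F)⁻¹ • h)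
    (hz : z ∈ Zset m one e h) {y : J} (hy : m e y = (2 : F)⁻¹ • y) :
    m z (m h y) = m h (m z y) := by
  have hzee : m (m z e) e = m z e := by rw [mul_mul_of_mem_Zset hz e_mem_H2span e_mem_H2span, hee]
  have hzeh : m (m z e) h = (2 : F)⁻¹ • m z h := by
    rw [mul_mul_of_mem_Zset hz e_mem_H2span h_mem_H2span, heh, map_smul]
  -- put both in the normal form of `simp only [comm]`, so that they still fire after reordering
  simp only [comm] at hzee hzeh
  linear_combination (norm := skip) 2 • jordan_linearized hchar comm jordan e h z y
    - 4 • jordan_linearized hchar comm jordan e h (m z e) y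
  simp only [jassoc, comm, heh, hy, hzee, hzeh, map_smul, LinearMap.smul_apply]
  match_scalars <;> field_simp <;> ring

theorem e_mul_jassoc_of_mem_Zset (hchar : (2 : F) ≠ 0) (comm : ∀ x y : J, m x y = m y x)
    (jordan : ∀ x y : J, m (m (m x x) y) x = m (m x x) (m y x)) (hee : m e e = e)
    (hz : z ∈ Zset m one e h) {n : J} (hn : m e n = (2 : F)⁻¹ • n) :
    m e (jassoc m z e n) = (2 : F)⁻¹ • jassoc m z e n := by
  simp only [jassoc, map_sub, hn, map_smul, smul_sub,
    e_mul_mul_of_mem_Zset hchar comm jordan hee hz hn,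
    peirce_one_mul_half hchar comm jordan hee (e_mul_mul_e_of_mem_Zset comm hee hz) hn]

theorem jassoc_e_mul_of_mem_Zset (hchar : (2 : F) ≠ 0) (comm : ∀ x y : J, m x y = m y x)
    (jordan : ∀ x y : J, m (m (m x x) y) x = m (m x x) (m y x)) (hee : m e e = e)
    (hz : z ∈ Zset m one e h) {n : J} (hn : m e n = (2 : F)⁻¹ • n) :
    jassoc m z e (m z n) = m z (jassoc m z e n) := by
  have key := peirce_one_zero_mul_comm_half hchar comm jordan hee
    (e_mul_mul_e_of_mem_Zset comm hee hz) (e_mul_sub_mul_e_of_mem_Zset comm hee hz) hn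
  simp only [map_sub, LinearMap.sub_apply] at key
  simp only [jassoc, hn, e_mul_mul_of_mem_Zset hchar comm jordan hee hz hn, map_sub, map_smul]
  linear_combination (norm := module) key

end

theorem stmt13_general {F J : Type*} [Field F] [AddCommGroup J] [Module F J]
    (hchar : (2 : F) ≠ 0)
    (m : J →ₗ[F] J →ₗ[F] J)
    (comm : ∀ x y : J, m x y = m y x)
    (jordan : ∀ x y : J, m (m (m x x) y) x = m (m x x) (m y x))
    (one e h : J)
    (one_mul : ∀ x : J, m one x = x)
    (hee : m e e = e) (hhh : m h h = one) (heh : m e h = (2 : F)⁻¹ • h) :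
    ∀ z ∈ Zset m one e h, ∀ n ∈ Nset m e h,
      m h (jassoc m z e n) ∈ Zset m one e h ∧
      m h (jassoc m (m z z) e n) = (2 : F) • m z (m h (jassoc m z e n)) ∧
      m h (jassoc m (m z z) e n) = (2 : F) • m h (jassoc m z e (m z n)) := by
  intro z hz n ⟨hen, _⟩
  have hw := e_mul_jassoc_of_mem_Zset hchar comm jordan hee hz hen
  refine ⟨h_mul_mem_Zset_of_peirce_half hchar comm jordan one_mul hee hhh heh hw, ?_, ?_⟩
  · rw [jassoc_mul_self_left hchar comm jordan,
      jassoc_e_mul_of_mem_Zset hchar comm jordan hee hz hen, map_smul,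
      mul_h_mul_comm_of_mem_Zset hchar comm jordan hee heh hz hw]
  · rw [jassoc_mul_self_left hchar comm jordan, map_smul]

/-- With [z,n] := h(z,e,n) for z ∈ Z, n ∈ N: [z,n] ∈ Z and
[z²,n] = 2z[z,n] = 2[z,zn]. -/
theorem stmt13 {F J : Type*} [Field F] [AddCommGroup J] [Module F J]
    (hchar : (2 : F) ≠ 0)
    (m : J →ₗ[F] J →ₗ[F] J)
    (comm : ∀ x y : J, m x y = m y x)
    (jordan : ∀ x y : J, m (m (m x x) y) x = m (m x x) (m y x))
    (one e h : J)
    (one_mul : ∀ x : J, m one x = x)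
    (hee : m e e = e) (hhh : m h h = one) (heh : m e h = (2 : F)⁻¹ • h)
    (hli : LinearIndependent F ![one, e, h]) :
    ∀ z ∈ Zset m one e h, ∀ n ∈ Nset m e h,
      m h (jassoc m z e n) ∈ Zset m one e h ∧
      m h (jassoc m (m z z) e n) = (2 : F) • m z (m h (jassoc m z e n)) ∧
      m h (jassoc m (m z z) e n) = (2 : F) • m h (jassoc m z e (m z n)) :=
  stmt13_general hchar m comm jordan one e h one_mul hee hhh heh
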